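/- arXiv:2211.06749 — 3 statements merged into one kernel-verified Lean document; each statement's English description precedes it below -/
import Mathlib

section
/- The limit lim_{n→∞} |C_{0,π/3}(n)| / |C(n)| exists and equals (1 + √3)/16. -/
/-!
By the symmetries of the circle, `C(n)` consists of four reflected copies of the boxes meeting
the open quarter circle, and `C_{0,π/3}` is the part of that quarter circle where `x > 1/2`.
Over a column `i/n < x < (i+1)/n` the arc `y = √(1 - x²)` is monotone, so by the intermediate
value theorem it meets exactly the boxes `j` with `⌊n y((i+1)/n)⌋ ≤ j < ⌈n y(i/n)⌉`. Summing over
the columns telescopes: the arc over `s < x < 1` meets `n (√(1 - s²) + 1 - s) + O(1)` boxes, less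
one box for each lattice point `(i, m)`, `i² + m² = n²`, through which it passes. There are `o(n)`
such points: three of them within horizontal distance `w` on the part of the circle where
`y ≥ n/2` span a lattice triangle of area at least `1/2`, which forces `n ≤ 6 w³`. Hence
`|C_{0,π/3}(n)| ~ n (√3/2 + 1/2)` and `|C(n)| ~ 8 n`.
-/

open Real Set Filter

/-- The open interior of the box `B_{i,j}(n) = [i/n,(i+1)/n] × [j/n,(j+1)/n]`. -/
def boxInt (n : ℕ) (i j : ℤ) : Set (ℝ × ℝ) :=
  {p | (i : ℝ) / n < p.1 ∧ p.1 < ((i : ℝ) + 1) / n ∧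
       (j : ℝ) / n < p.2 ∧ p.2 < ((j : ℝ) + 1) / n}

/-- The plane unit circle `C`. -/
def unitCircle : Set (ℝ × ℝ) := {p | p.1 ^ 2 + p.2 ^ 2 = 1}

/-- The approximation `X(n)` of a set `X ⊆ ℝ²`: the boxes (encoded by their index
pairs `(i,j) ∈ ℤ²`) whose open interior intersects `X`. -/
def approx (n : ℕ) (X : Set (ℝ × ℝ)) : Set (ℤ × ℤ) :=
  {ij | (boxInt n ij.1 ij.2 ∩ X).Nonempty}

/-- The open arc `C_{α,β} = {(cos t, sin t) : α < t < β}` of the unit circle. -/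
def arc (α β : ℝ) : Set (ℝ × ℝ) :=
  {p | ∃ t : ℝ, α < t ∧ t < β ∧ p = (Real.cos t, Real.sin t)}

open Topology
open scoped Finset

lemma exists_lt_lt_of_two_lt_card {α : Type*} [LinearOrder α] {s : Finset α} (hs : 2 < #s) :
    ∃ a ∈ s, ∃ b ∈ s, ∃ c ∈ s, a < b ∧ b < c := by
  obtain ⟨t, hts, ht⟩ := Finset.exists_subset_card_eq hs
  have mem (i : Fin 3) : t.orderEmbOfFin ht i ∈ s := hts (t.orderEmbOfFin_mem ht i)
  exact ⟨_, mem 0, _, mem 1, _, mem 2, (t.orderEmbOfFin ht).strictMono (by decide),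
    (t.orderEmbOfFin ht).strictMono (by decide)⟩

lemma sub_lt_of_div_eq_div {a c w : ℕ} (hw : 0 < w) (h : a / w = c / w) : c - a < w := by
  have ha := Nat.div_add_mod a w
  have hc := Nat.div_add_mod c w
  have := Nat.mod_lt c hw
  rw [h] at ha
  omega

lemma sum_Ico_sub_add_one {G : Type*} [AddCommGroup G] (f : ℤ → G) {a b : ℤ} (hab : a ≤ b) :
    ∑ i ∈ Finset.Ico a b, (f i - f (i + 1)) = f a - f b := by
  induction b, hab using Int.leInduction with
  | base => simp
  | succ b hab ih =>
    rw [← Finset.sum_Ico_add_eq_sum_Ico_add_one hab, ih]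
    abel

lemma ceil_sub_floor_eq_ite {R : Type*} [Ring R] [LinearOrder R] [IsOrderedRing R] [FloorRing R]
    (x : R) : ⌈x⌉ - ⌊x⌋ = if Int.fract x = 0 then 0 else 1 := by
  split_ifs with h
  · obtain ⟨k, rfl⟩ := Int.fract_eq_zero_iff.1 h
    simp
  · rw [Int.ceil_eq_floor_add_one_iff_notMem x |>.2 (mt Int.fract_eq_zero_iff.2 h)]
    ring

lemma sum_Ico_ceil_sub_floor_add_one {R : Type*} [Ring R] [LinearOrder R] [IsOrderedRing R]
    [FloorRing R] (t : ℤ → R) {a b : ℤ} (hab : a ≤ b) :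
    ∑ i ∈ Finset.Ico a b, (⌈t i⌉ - ⌊t (i + 1)⌋) =
      ⌊t a⌋ - ⌊t b⌋ + (b - a) - #{i ∈ Finset.Ico a b | Int.fract (t i) = 0} := by
  have hsplit (i : ℤ) : ⌈t i⌉ - ⌊t (i + 1)⌋ =
      (⌊t i⌋ - ⌊t (i + 1)⌋) + (1 - if Int.fract (t i) = 0 then 1 else 0) := by
    have := ceil_sub_floor_eq_ite (t i)
    split_ifs at this ⊢ <;> omega
  simp only [hsplit, Finset.sum_add_distrib, sum_Ico_sub_add_one (fun i => ⌊t i⌋) hab,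
    Finset.sum_sub_distrib, Finset.sum_boole, Finset.sum_const, Int.card_Ico, nsmul_one]
  rw [Int.toNat_of_nonneg (sub_nonneg.2 hab)]
  ring

lemma setOf_columns_eq_biUnion (a b : ℤ) (lo hi : ℤ → ℤ) :
    {p : ℤ × ℤ | (a ≤ p.1 ∧ p.1 < b) ∧ lo p.1 ≤ p.2 ∧ p.2 < hi p.1} =
      ↑((Finset.Ico a b).biUnion fun i => (Finset.Ico (lo i) (hi i)).map (.sectR i ℤ)) := by
  ext ⟨i, j⟩
  simp only [Set.mem_ofPred_eq, Finset.coe_biUnion, Finset.coe_Ico, Finset.coe_map,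
    Function.Embedding.sectR_apply, Set.mem_iUnion, Set.mem_image, Set.mem_Ico, Prod.mk.injEq]
  constructor
  · rintro ⟨hi, hj⟩
    exact ⟨i, hi, j, hj, rfl, rfl⟩
  · rintro ⟨i, hi, j, hj, rfl, rfl⟩
    exact ⟨hi, hj⟩

lemma ncard_setOf_columns {a b : ℤ} {lo hi : ℤ → ℤ} (h : ∀ i ∈ Finset.Ico a b, lo i ≤ hi i) :
    ({p : ℤ × ℤ | (a ≤ p.1 ∧ p.1 < b) ∧ lo p.1 ≤ p.2 ∧ p.2 < hi p.1}.ncard : ℤ) =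
      ∑ i ∈ Finset.Ico a b, (hi i - lo i) := by
  rw [setOf_columns_eq_biUnion, Set.ncard_coe_finset, Finset.card_biUnion]
  · push_cast
    refine Finset.sum_congr rfl fun i hi => ?_
    rw [Finset.card_map, Int.card_Ico, Int.toNat_of_nonneg (sub_nonneg.2 (h i hi))]
  · intro i _ i' _ hii'
    simp only [Finset.disjoint_left, Finset.mem_map, Function.Embedding.sectR_apply]
    rintro _ ⟨j, -, rfl⟩ ⟨j', -, h⟩
    exact hii' (congrArg Prod.fst h).symm

lemma exists_mem_Ioo_apply_mem_Ioo_iff {α δ : Type*} [ConditionallyCompleteLinearOrder α]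
    [TopologicalSpace α] [OrderTopology α] [DenselyOrdered α] [LinearOrder δ] [TopologicalSpace δ]
    [OrderClosedTopology δ] [DenselyOrdered δ] {f : α → δ} {l r : α} {c d : δ}
    (hlr : l < r) (hcd : c < d) (hf : ContinuousOn f (Icc l r)) (hf' : StrictAntiOn f (Icc l r)) :
    (∃ x ∈ Ioo l r, f x ∈ Ioo c d) ↔ f r < d ∧ c < f l := by
  constructor
  · rintro ⟨x, hx, hxc, hxd⟩
    have hx' := Ioo_subset_Icc_self hx
    exact ⟨(hf' hx' (right_mem_Icc.2 hlr.le) hx.2).trans hxd,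
      hxc.trans (hf' (left_mem_Icc.2 hlr.le) hx' hx.1)⟩
  · rintro ⟨hrd, hcl⟩
    have hrl : f r < f l := hf' (left_mem_Icc.2 hlr.le) (right_mem_Icc.2 hlr.le) hlr
    obtain ⟨y, hy₁, hy₂⟩ := exists_between (max_lt_iff.2 ⟨lt_min hcd hcl, lt_min hrd hrl⟩)
    obtain ⟨x, hx, rfl⟩ := intermediate_value_Ioo' hlr.le hf ⟨(le_max_right _ _).trans_lt hy₁,
      hy₂.trans_le (min_le_right _ _)⟩
    exact ⟨x, hx, (le_max_left _ _).trans_lt hy₁, hy₂.trans_le (min_le_left _ _)⟩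

lemma strictAntiOn_sqrt_one_sub_sq : StrictAntiOn (fun x : ℝ => √(1 - x ^ 2)) (Icc 0 1) :=
  fun x hx y hy hxy => Real.sqrt_lt_sqrt (by nlinarith [hy.1, hy.2]) (by nlinarith [hx.1])

section LatticePoints

open Finset

lemma le_of_three_lattice_points {n w a b c x y z : ℤ}
    (ha : 0 < a) (hab : a < b) (hbc : b < c) (hca : c - a ≤ w)
    (h₁ : a ^ 2 + x ^ 2 = n ^ 2) (h₂ : b ^ 2 + y ^ 2 = n ^ 2) (h₃ : c ^ 2 + z ^ 2 = n ^ 2)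
    (hx : n ≤ 2 * x) (hy : n ≤ 2 * y) (hz : n ≤ 2 * z) : n ≤ 6 * w ^ 3 := by
  rcases le_or_gt n 0 with hn | hn
  · have : 0 < w ^ 3 := pow_pos (by omega) 3
    omega
  have hzy : z < y := by nlinarith
  have hyx : y < x := by nlinarith
  have hcn : c ≤ n := by nlinarith
  have hxn : x ≤ n := by nlinarith
  -- `D` is twice the area of the lattice triangle with vertices `(a, x), (b, y), (c, z)`:
  -- a positive integer, which `key` bounds in terms of the width `c - a`.
  set D := (b - a) * (x - z) - (c - a) * (x - y)
  set N := (a + b) * (y - z) + (x + y) * (c - b)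
  have key : D * ((x + y) * (x + z)) = (b - a) * (c - a) * N := by
    linear_combination (b - a) * (x + y) * (h₁ - h₃) - (c - a) * (x + z) * (h₁ - h₂)
  have hP : 0 < (x + y) * (x + z) := mul_pos (by omega) (by omega)
  have hN : 0 < N := add_pos (mul_pos (by omega) (by omega)) (mul_pos (by omega) (by omega))
  have hD : 0 < D := by
    refine pos_of_mul_pos_left (key ▸ ?_) hP.le
    exact mul_pos (mul_pos (by omega) (by omega)) hN
  have hyz : y - z ≤ 2 * w := by
    refine le_of_mul_le_mul_right ?_ hn
    calc (y - z) * n ≤ (y - z) * (y + z) := mul_le_mul_of_nonneg_left (by omega) (by omega)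
      _ = (c - b) * (c + b) := by linear_combination h₂ - h₃
      _ ≤ w * (2 * n) := mul_le_mul (by omega) (by omega) (by omega) (by omega)
      _ = 2 * w * n := by ring
  have hN_le : N ≤ 6 * n * w := by
    have : (a + b) * (y - z) ≤ 2 * n * (2 * w) := mul_le_mul (by omega) hyz (by omega) (by omega)
    have : (x + y) * (c - b) ≤ 2 * n * w := mul_le_mul (by omega) (by omega) (by omega) (by omega)
    linarith
  refine le_of_mul_le_mul_right ?_ hn
  calc n * n ≤ (x + y) * (x + z) := mul_le_mul (by omega) (by omega) (by omega) (by omega)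
    _ ≤ D * ((x + y) * (x + z)) := le_mul_of_one_le_left hP.le hD
    _ = (b - a) * (c - a) * N := key
    _ ≤ w * w * (6 * n * w) :=
      mul_le_mul (mul_le_mul (by omega) hca (by omega) (by omega)) hN_le hN.le (mul_self_nonneg w)
    _ = 6 * w ^ 3 * n := by ring

def circleLatticePoints (n : ℕ) : Finset (ℕ × ℕ) :=
  (Finset.Ioo 0 n ×ˢ Finset.Ioo 0 n).filter fun p => p.1 ^ 2 + p.2 ^ 2 = n ^ 2

lemma mem_circleLatticePoints {n : ℕ} {p : ℕ × ℕ} :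
    p ∈ circleLatticePoints n ↔
      0 < p.1 ∧ p.1 < n ∧ 0 < p.2 ∧ p.2 < n ∧ p.1 ^ 2 + p.2 ^ 2 = n ^ 2 := by
  simp [circleLatticePoints, and_assoc]

def latticeAbscissaeAboveHalf (n : ℕ) : Finset ℕ :=
  ((circleLatticePoints n).filter fun p => n ≤ 2 * p.2).image Prod.fst

lemma mem_latticeAbscissaeAboveHalf {n a : ℕ} :
    a ∈ latticeAbscissaeAboveHalf n ↔
      ∃ x, 0 < a ∧ a < n ∧ a ^ 2 + x ^ 2 = n ^ 2 ∧ n ≤ 2 * x := by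
  simp only [latticeAbscissaeAboveHalf, Finset.mem_image, mem_filter, mem_circleLatticePoints,
    Prod.exists, exists_and_right, exists_eq_right]
  constructor
  · rintro ⟨x, ⟨h₁, h₂, -, -, h₃⟩, h₄⟩
    exact ⟨x, h₁, h₂, h₃, h₄⟩
  · rintro ⟨x, h₁, h₂, h₃, h₄⟩
    exact ⟨x, ⟨h₁, h₂, by omega, by nlinarith, h₃⟩, h₄⟩

lemma card_filter_le_card_latticeAbscissaeAboveHalf (n : ℕ) :
    #((circleLatticePoints n).filter fun p => n ≤ 2 * p.2) ≤ #(latticeAbscissaeAboveHalf n) := by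
  refine (card_image_of_injOn ?_).ge
  rintro ⟨a, x⟩ hp ⟨b, y⟩ hq (rfl : a = b)
  simp only [coe_filter, mem_circleLatticePoints, Set.mem_ofPred] at hp hq
  have : x ^ 2 = y ^ 2 := by omega
  rw [Nat.pow_left_injective two_ne_zero this]

lemma card_circleLatticePoints_le_two_mul (n : ℕ) :
    #(circleLatticePoints n) ≤ 2 * #(latticeAbscissaeAboveHalf n) := by
  set P := circleLatticePoints n
  have hsplit : P = P.filter (fun p => n ≤ 2 * p.2) ∪ P.filter (fun p => n ≤ 2 * p.1) := by
    rw [← filter_or, eq_comm, filter_true_of_mem]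
    intro p hp
    rw [mem_circleLatticePoints] at hp
    by_contra! h
    nlinarith
  have hswap : #(P.filter fun p => n ≤ 2 * p.1) = #(P.filter fun p => n ≤ 2 * p.2) := by
    refine card_equiv (Equiv.prodComm ℕ ℕ) fun p => ?_
    simp only [P, mem_filter, mem_circleLatticePoints, Equiv.prodComm_apply, Prod.fst_swap,
      Prod.snd_swap]
    constructor <;> rintro ⟨⟨h₁, h₂, h₃, h₄, h₅⟩, h₆⟩ <;> exact ⟨⟨h₃, h₄, h₁, h₂, by omega⟩, h₆⟩
  calc #P ≤ #(P.filter fun p => n ≤ 2 * p.2) + #(P.filter fun p => n ≤ 2 * p.1) := by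
        conv_lhs => rw [hsplit]
        exact Finset.card_union_le _ _
    _ ≤ 2 * #(latticeAbscissaeAboveHalf n) := by
      rw [hswap, two_mul]
      exact add_le_add (card_filter_le_card_latticeAbscissaeAboveHalf n)
        (card_filter_le_card_latticeAbscissaeAboveHalf n)

lemma card_filter_div_eq_le_two {n w : ℕ} (hw : 0 < w) (hn : 6 * w ^ 3 < n) (k : ℕ) :
    #{a ∈ latticeAbscissaeAboveHalf n | a / w = k} ≤ 2 := by
  by_contra! hk
  obtain ⟨a, ha, b, hb, c, hc, hab, hbc⟩ := exists_lt_lt_of_two_lt_card hk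
  simp only [mem_filter, mem_latticeAbscissaeAboveHalf] at ha hb hc
  obtain ⟨⟨x, ha₀, -, hx, hxn⟩, rfl⟩ := ha
  obtain ⟨⟨y, -, -, hy, hyn⟩, -⟩ := hb
  obtain ⟨⟨z, -, -, hz, hzn⟩, hck⟩ := hc
  have hca := sub_lt_of_div_eq_div hw hck.symm
  have := le_of_three_lattice_points (n := n) (w := w) (a := a) (b := b) (c := c) (x := x)
    (y := y) (z := z) (by exact_mod_cast ha₀) (by exact_mod_cast hab) (by exact_mod_cast hbc)
    (by omega) (by exact_mod_cast hx) (by exact_mod_cast hy) (by exact_mod_cast hz)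
    (by exact_mod_cast hxn) (by exact_mod_cast hyn) (by exact_mod_cast hzn)
  have : n ≤ 6 * w ^ 3 := by exact_mod_cast this
  omega

lemma card_latticeAbscissaeAboveHalf_le {n w : ℕ} (hw : 0 < w) (hn : 6 * w ^ 3 < n) :
    #(latticeAbscissaeAboveHalf n) ≤ 2 * (n / w + 1) := by
  set A := latticeAbscissaeAboveHalf n
  have himage : A.image (· / w) ⊆ range (n / w + 1) := by
    intro k hk
    obtain ⟨a, ha, rfl⟩ := Finset.mem_image.1 hk
    obtain ⟨x, -, han, -⟩ := mem_latticeAbscissaeAboveHalf.1 ha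
    exact mem_range.2 (Nat.lt_succ_of_le (Nat.div_le_div_right han.le))
  calc #A ≤ 2 * #(A.image (· / w)) :=
        card_le_mul_card_image A 2 fun k _ => card_filter_div_eq_le_two hw hn k
    _ ≤ 2 * (n / w + 1) :=
      Nat.mul_le_mul_left 2 ((Finset.card_le_card himage).trans (card_range _).le)

lemma card_circleLatticePoints_le {n w : ℕ} (hw : 0 < w) (hn : 6 * w ^ 3 < n) :
    #(circleLatticePoints n) ≤ 4 * (n / w + 1) := by
  have := card_circleLatticePoints_le_two_mul n
  have := card_latticeAbscissaeAboveHalf_le hw hn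
  omega

lemma tendsto_card_circleLatticePoints_div :
    Tendsto (fun n : ℕ => (#(circleLatticePoints n) : ℝ) / n) atTop (𝓝 0) := by
  refine tendsto_order.2 ⟨fun ε hε => Eventually.of_forall fun n => hε.trans_le (by positivity),
    fun ε hε => ?_⟩
  obtain ⟨w, hw⟩ := exists_nat_gt (8 / ε)
  have hw0 : (0 : ℝ) < w := (div_pos (by norm_num) hε).trans hw
  filter_upwards [eventually_gt_atTop (6 * w ^ 3), eventually_gt_atTop ⌈8 / ε⌉₊] with n hn hnε
  have hn0 : (0 : ℝ) < n := Nat.cast_pos.2 (by omega)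
  have hnε' : 8 / ε < n := Nat.lt_of_ceil_lt hnε
  calc (#(circleLatticePoints n) : ℝ) / n ≤ (4 * ((n / w : ℕ) + 1) : ℕ) / n := by
        gcongr
        exact card_circleLatticePoints_le (Nat.cast_pos.1 hw0) hn
    _ ≤ (4 * (n / w + 1) : ℝ) / n := by
        gcongr
        push_cast
        gcongr
        exact Nat.cast_div_le
    _ = 4 / w + 4 / n := by field_simp
    _ < ε / 2 + ε / 2 := by
        rw [div_lt_iff₀ hε] at hw hnε'
        refine add_lt_add ?_ ?_ <;> rw [div_lt_iff₀ (by assumption)] <;> linarith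
    _ = ε := add_halves ε

end LatticePoints

lemma boxInt_zero (i j : ℤ) : boxInt 0 i j = ∅ := by
  ext p
  simp only [boxInt, CharP.cast_eq_zero, div_zero, Set.mem_ofPred_eq, Set.mem_empty_iff_false,
    iff_false]
  rintro ⟨h₁, h₂, -⟩
  linarith

lemma mem_boxInt_iff {n : ℕ} (hn : 0 < n) {i j : ℤ} {p : ℝ × ℝ} :
    p ∈ boxInt n i j ↔ i < n * p.1 ∧ n * p.1 < i + 1 ∧ j < n * p.2 ∧ n * p.2 < j + 1 := by
  have hn : (0 : ℝ) < n := Nat.cast_pos.2 hn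
  simp only [boxInt, Set.mem_ofPred_eq, div_lt_iff₀ hn, lt_div_iff₀ hn, mul_comm (n : ℝ)]

lemma fst_pos_iff_of_mem_boxInt {n : ℕ} {i j : ℤ} {p : ℝ × ℝ} (hp : p ∈ boxInt n i j) :
    0 < p.1 ↔ 0 ≤ i := by
  rcases Nat.eq_zero_or_pos n with rfl | hn
  · simp [boxInt_zero] at hp
  obtain ⟨h₁, h₂, -⟩ := (mem_boxInt_iff hn).1 hp
  have hn : (0 : ℝ) < n := Nat.cast_pos.2 hn
  constructor
  · intro h
    have : (0 : ℝ) < i + 1 := by nlinarith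
    have : (0 : ℤ) < i + 1 := by exact_mod_cast this
    omega
  · intro h
    have : (0 : ℝ) ≤ i := by exact_mod_cast h
    exact pos_of_mul_pos_right (by linarith) hn.le

lemma fst_ne_zero_of_mem_boxInt {n : ℕ} {i j : ℤ} {p : ℝ × ℝ} (hp : p ∈ boxInt n i j) :
    p.1 ≠ 0 := by
  rcases Nat.eq_zero_or_pos n with rfl | hn
  · simp [boxInt_zero] at hp
  obtain ⟨h₁, h₂, -⟩ := (mem_boxInt_iff hn).1 hp
  intro h
  rw [h, mul_zero] at h₁ h₂
  have : i < 0 := by exact_mod_cast h₁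
  have : (0 : ℤ) < i + 1 := by exact_mod_cast h₂
  omega

lemma mem_boxInt_neg_fst {n : ℕ} {i j : ℤ} {p : ℝ × ℝ} :
    (-p.1, p.2) ∈ boxInt n i j ↔ p ∈ boxInt n (-1 - i) j := by
  simp only [boxInt, Set.mem_ofPred_eq, Int.cast_sub, Int.cast_neg, Int.cast_one]
  rw [show ((-1 - i : ℝ) + 1) / n = -(i / n) by ring,
    show (-1 - i : ℝ) / n = -((i + 1) / n) by ring]
  constructor <;> rintro ⟨h₁, h₂, h₃, h₄⟩ <;> exact ⟨by linarith, by linarith, h₃, h₄⟩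

lemma mem_boxInt_swap {n : ℕ} {i j : ℤ} {p : ℝ × ℝ} :
    p.swap ∈ boxInt n i j ↔ p ∈ boxInt n j i := by
  simp only [boxInt, Set.mem_ofPred_eq, Prod.fst_swap, Prod.snd_swap]
  tauto

lemma approx_preimage_neg_fst (n : ℕ) (X : Set (ℝ × ℝ)) :
    approx n ((fun p : ℝ × ℝ => (-p.1, p.2)) ⁻¹' X) =
      (fun ij : ℤ × ℤ => (-1 - ij.1, ij.2)) ⁻¹' approx n X := by
  ext ⟨i, j⟩
  simp only [approx, Set.mem_preimage, Set.mem_ofPred_eq]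
  constructor
  · rintro ⟨p, hp, hpX⟩
    exact ⟨(-p.1, p.2), by rwa [mem_boxInt_neg_fst, show -1 - (-1 - i) = i by ring], hpX⟩
  · rintro ⟨p, hp, hpX⟩
    exact ⟨(-p.1, p.2), mem_boxInt_neg_fst.2 hp, by simpa using hpX⟩

lemma approx_preimage_swap (n : ℕ) (X : Set (ℝ × ℝ)) :
    approx n (Prod.swap ⁻¹' X) = Prod.swap ⁻¹' approx n X := by
  ext ⟨i, j⟩
  simp only [approx, Set.mem_preimage, Set.mem_ofPred_eq, Prod.fst_swap, Prod.snd_swap]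
  constructor
  · rintro ⟨p, hp, hpX⟩
    exact ⟨p.swap, mem_boxInt_swap.2 hp, hpX⟩
  · rintro ⟨p, hp, hpX⟩
    exact ⟨p.swap, by rwa [mem_boxInt_swap], by simpa using hpX⟩

lemma encard_approx_preimage_swap (n : ℕ) (X : Set (ℝ × ℝ)) :
    (approx n (Prod.swap ⁻¹' X)).encard = (approx n X).encard := by
  rw [approx_preimage_swap, ← Set.image_swap_eq_preimage_swap,
    Prod.swap_injective.encard_image]

lemma approx_mono (n : ℕ) {X Y : Set (ℝ × ℝ)} (h : X ⊆ Y) : approx n X ⊆ approx n Y :=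
  fun _ hij => hij.mono (Set.inter_subset_inter_right _ h)

lemma encard_approx_eq_two_mul (n : ℕ) {X : Set (ℝ × ℝ)}
    (hX : (fun p : ℝ × ℝ => (-p.1, p.2)) ⁻¹' X = X) :
    (approx n X).encard = 2 * (approx n (X ∩ {p | 0 < p.1})).encard := by
  set σ : ℤ × ℤ → ℤ × ℤ := fun ij => (-1 - ij.1, ij.2)
  have hσ : Function.Involutive σ := fun ij => by simp [σ]
  set A := approx n (X ∩ {p | 0 < p.1})
  have hneg : σ ⁻¹' A = approx n (X ∩ {p | 0 < -p.1}) := by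
    rw [← approx_preimage_neg_fst, Set.preimage_inter, hX]
    rfl
  have hsplit : approx n X = A ∪ σ ⁻¹' A := by
    rw [hneg]
    refine subset_antisymm (fun ij ⟨p, hp, hpX⟩ => ?_)
      (Set.union_subset (approx_mono n Set.inter_subset_left)
        (approx_mono n Set.inter_subset_left))
    rcases (fst_ne_zero_of_mem_boxInt hp).lt_or_gt with h | h
    · exact Or.inr ⟨p, hp, hpX, neg_pos.2 h⟩
    · exact Or.inl ⟨p, hp, hpX, h⟩
  have hdisj : Disjoint A (σ ⁻¹' A) := by
    rw [Set.disjoint_left]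
    rintro ⟨i, j⟩ ⟨p, hp, -, hp₀⟩ ⟨q, hq, -, hq₀⟩
    simp only [σ] at hq
    have := (fst_pos_iff_of_mem_boxInt hp).1 hp₀
    have := (fst_pos_iff_of_mem_boxInt hq).1 hq₀
    omega
  rw [hsplit, Set.encard_union_eq hdisj, ← hσ.image_eq_preimage_symm, hσ.injective.encard_image,
    two_mul]

def upperArc (s : ℝ) : Set (ℝ × ℝ) := unitCircle ∩ {p | 0 < p.2 ∧ s < p.1}

/-- `n` times the height of `upperArc s` above the left edge `x = i / n` of the `i`-th column of
boxes, or above `x = s` when that lies further right. -/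
noncomputable def scaledArcHeight (n : ℕ) (s : ℝ) (i : ℤ) : ℝ :=
  n * √(1 - max ((i : ℝ) / n) s ^ 2)

lemma scaledArcHeight_nonneg (n : ℕ) (s : ℝ) (i : ℤ) : 0 ≤ scaledArcHeight n s i := by
  unfold scaledArcHeight
  positivity

lemma antitone_scaledArcHeight (n : ℕ) {s : ℝ} (hs : 0 ≤ s) : Antitone (scaledArcHeight n s) := by
  intro i k hik
  have hi : 0 ≤ max ((i : ℝ) / n) s := le_max_of_le_right hs
  unfold scaledArcHeight
  gcongr

lemma scaledArcHeight_floor {n : ℕ} (hn : 0 < n) (s : ℝ) :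
    scaledArcHeight n s ⌊n * s⌋ = n * √(1 - s ^ 2) := by
  have hn : (0 : ℝ) < n := Nat.cast_pos.2 hn
  rw [scaledArcHeight, max_eq_right ((div_le_iff₀' hn).2 (Int.floor_le _))]

lemma scaledArcHeight_natCast {n : ℕ} (hn : 0 < n) {s : ℝ} (hs : s ≤ 1) :
    scaledArcHeight n s n = 0 := by
  rw [scaledArcHeight, Int.cast_natCast, div_self (Nat.cast_pos.2 hn).ne', max_eq_left hs]
  simp

lemma scaledArcHeight_sq {n : ℕ} (hn : 0 < n) {s : ℝ} (hs : 0 ≤ s) {i : ℤ} (hsi : n * s ≤ i)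
    (hin : i ≤ n) : scaledArcHeight n s i ^ 2 = n ^ 2 - i ^ 2 := by
  have hn : (0 : ℝ) < n := Nat.cast_pos.2 hn
  have hin : (i : ℝ) ≤ n := by exact_mod_cast hin
  have hi : s ≤ i / n := (le_div_iff₀' hn).2 hsi
  have hi₀ : 0 ≤ (i : ℝ) / n := hs.trans hi
  rw [scaledArcHeight, max_eq_left hi, mul_pow, Real.sq_sqrt]
  · field_simp
  · rw [sub_nonneg, sq_le_one_iff_abs_le_one, abs_of_nonneg hi₀]
    exact (div_le_one hn).2 hin

lemma mem_upperArc_iff {s : ℝ} (hs : -1 ≤ s) {p : ℝ × ℝ} :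
    p ∈ upperArc s ↔ s < p.1 ∧ p.1 < 1 ∧ p.2 = √(1 - p.1 ^ 2) := by
  obtain ⟨x, y⟩ := p
  simp only [upperArc, unitCircle, Set.mem_inter_iff, Set.mem_ofPred_eq]
  constructor
  · rintro ⟨hxy, hy, hx⟩
    refine ⟨hx, by nlinarith, ?_⟩
    rw [← Real.sqrt_sq hy.le]
    congr 1
    linarith
  · rintro ⟨hx, hx1, rfl⟩
    have h : 0 < 1 - x ^ 2 := by nlinarith
    exact ⟨by rw [Real.sq_sqrt h.le]; ring, Real.sqrt_pos.2 h, hx⟩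

lemma mem_approx_upperArc_iff_exists {n : ℕ} {s : ℝ} (hs : -1 ≤ s) {i j : ℤ} :
    (i, j) ∈ approx n (upperArc s) ↔ ∃ x ∈ Ioo (max (i / n : ℝ) s) (min (((i : ℝ) + 1) / n) 1),
      √(1 - x ^ 2) ∈ Ioo (j / n : ℝ) ((j + 1) / n) := by
  simp only [approx, boxInt, Set.Nonempty, Set.mem_inter_iff, mem_upperArc_iff hs,
    Set.mem_ofPred_eq, Prod.exists, Set.mem_Ioo, max_lt_iff, lt_min_iff]
  constructor
  · rintro ⟨x, _, ⟨h₁, h₂, h₃, h₄⟩, h₅, h₆, rfl⟩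
    exact ⟨x, ⟨⟨h₁, h₅⟩, h₂, h₆⟩, h₃, h₄⟩
  · rintro ⟨x, ⟨⟨h₁, h₅⟩, h₂, h₆⟩, h₃, h₄⟩
    exact ⟨x, _, ⟨h₁, h₂, h₃, h₄⟩, h₅, h₆, rfl⟩

lemma mem_approx_upperArc_iff {n : ℕ} (hn : 0 < n) {s : ℝ} (hs : 0 ≤ s) {i j : ℤ} :
    (i, j) ∈ approx n (upperArc s) ↔ (⌊n * s⌋ ≤ i ∧ i < n) ∧
      ⌊scaledArcHeight n s (i + 1)⌋ ≤ j ∧ j < ⌈scaledArcHeight n s i⌉ := by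
  have hn : (0 : ℝ) < n := Nat.cast_pos.2 hn
  have hcol : ⌊n * s⌋ ≤ i ∧ i < n ↔ max (i / n : ℝ) s < min (((i : ℝ) + 1) / n) 1 := by
    rw [Int.floor_le_iff, max_lt_iff, lt_min_iff, lt_min_iff, div_lt_div_iff_of_pos_right hn,
      div_lt_one hn, lt_div_iff₀ hn, ← Int.cast_lt (R := ℝ), Int.cast_natCast]
    constructor
    · rintro ⟨h₁, h₂⟩
      have : (i : ℝ) + 1 ≤ n := by exact_mod_cast h₂
      exact ⟨⟨by linarith, h₂⟩, by linarith, by nlinarith⟩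
    · rintro ⟨⟨-, h₂⟩, h₃, -⟩
      exact ⟨by linarith, h₂⟩
  rw [mem_approx_upperArc_iff_exists (by linarith)]
  by_cases hi : ⌊n * s⌋ ≤ i ∧ i < n
  · have hr : (i + 1) / n ≤ (1 : ℝ) := by
      rw [div_le_one hn]
      exact_mod_cast hi.2
    rw [min_eq_left hr] at hcol ⊢
    have hsr : s < (i + 1) / n := (max_lt_iff.1 (hcol.1 hi)).2
    rw [exists_mem_Ioo_apply_mem_Ioo_iff (hcol.1 hi) (by gcongr; linarith)
      (by fun_prop) (strictAntiOn_sqrt_one_sub_sq.mono ?_)]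
    · simp only [hi, true_and]
      simp only [scaledArcHeight, Int.cast_add, Int.cast_one, max_eq_left hsr.le,
        Int.floor_le_iff, Int.lt_ceil, lt_div_iff₀ hn, div_lt_iff₀ hn, mul_comm (n : ℝ)]
    · exact Set.Icc_subset_Icc (le_max_of_le_right hs) hr
  · simp only [hi, false_and, iff_false]
    rintro ⟨x, hx, -⟩
    exact hi (hcol.2 (hx.1.trans hx.2))

lemma ncard_approx_upperArc {n : ℕ} (hn : 0 < n) {s : ℝ} (hs₀ : 0 ≤ s) (hs₁ : s < 1) :
    ((approx n (upperArc s)).ncard : ℤ) = ⌊n * √(1 - s ^ 2)⌋ + (n - ⌊n * s⌋) -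
      #{i ∈ Finset.Ico ⌊n * s⌋ n | Int.fract (scaledArcHeight n s i) = 0} := by
  have hset : approx n (upperArc s) = {p : ℤ × ℤ | (⌊n * s⌋ ≤ p.1 ∧ p.1 < n) ∧
      ⌊scaledArcHeight n s (p.1 + 1)⌋ ≤ p.2 ∧ p.2 < ⌈scaledArcHeight n s p.1⌉} := by
    ext ⟨i, j⟩
    exact mem_approx_upperArc_iff hn hs₀
  have hfloor : ⌊n * s⌋ ≤ n := Int.floor_le_iff.2 (by push_cast; nlinarith)
  rw [hset, ncard_setOf_columns (lo := fun i => ⌊scaledArcHeight n s (i + 1)⌋)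
      (hi := fun i => ⌈scaledArcHeight n s i⌉) fun i _ => (Int.floor_le_floor
      (antitone_scaledArcHeight n hs₀ (Int.le_add_one le_rfl))).trans (Int.floor_le_ceil _),
    sum_Ico_ceil_sub_floor_add_one _ hfloor, scaledArcHeight_floor hn,
    scaledArcHeight_natCast hn hs₁.le, Int.floor_zero]
  ring

lemma card_filter_fract_scaledArcHeight_le {n : ℕ} (hn : 0 < n) {s : ℝ} (hs : 0 ≤ s) :
    #{i ∈ Finset.Ico ⌊n * s⌋ n | Int.fract (scaledArcHeight n s i) = 0} ≤
      #(circleLatticePoints n) + 1 := by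
  -- Past the first column `scaledArcHeight n s i = √(n² - i²)`, so an integral value there
  -- comes from a lattice point `(i, k)` on the circle of radius `n`.
  refine (Finset.card_le_card (t := insert ⌊n * s⌋
    ((circleLatticePoints n).image fun p => (p.1 : ℤ))) fun i hi => ?_).trans
    ((Finset.card_insert_le _ _).trans (Nat.add_le_add_right Finset.card_image_le _))
  simp only [Finset.mem_filter, Finset.mem_Ico] at hi
  obtain ⟨⟨hi₁, hi₂⟩, hfract⟩ := hi
  rcases hi₁.eq_or_lt with rfl | hi₁
  · exact Finset.mem_insert_self _ _
  refine Finset.mem_insert_of_mem (Finset.mem_image.2 ?_)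
  have hsi : n * s < i := Int.floor_lt.1 hi₁
  obtain ⟨k, hk⟩ := Int.fract_eq_zero_iff.1 hfract
  have hsq := scaledArcHeight_sq hn hs hsi.le hi₂.le
  have hk₀ : (0 : ℝ) ≤ k := hk ▸ scaledArcHeight_nonneg n s i
  rw [← hk] at hsq
  have hfloor : 0 ≤ ⌊n * s⌋ := Int.floor_nonneg.2 (by positivity)
  lift i to ℕ using hfloor.trans hi₁.le
  lift k to ℕ using (by exact_mod_cast hk₀)
  have hpyth : i ^ 2 + k ^ 2 = n ^ 2 := by
    have : ((i ^ 2 + k ^ 2 : ℕ) : ℝ) = (n ^ 2 : ℕ) := by push_cast at hsq ⊢; linarith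
    exact_mod_cast this
  have hi₀ : 0 < i := by omega
  have hin : i < n := by omega
  exact ⟨(i, k), mem_circleLatticePoints.2 ⟨hi₀, hin, by nlinarith, by nlinarith, hpyth⟩, rfl⟩

lemma abs_ncard_approx_upperArc_sub_le {n : ℕ} (hn : 0 < n) {s : ℝ} (hs₀ : 0 ≤ s) (hs₁ : s < 1) :
    |((approx n (upperArc s)).ncard : ℝ) - n * (√(1 - s ^ 2) + 1 - s)| ≤
      #(circleLatticePoints n) + 2 := by
  have hcount : ((approx n (upperArc s)).ncard : ℝ) = ⌊n * √(1 - s ^ 2)⌋ + (n - ⌊n * s⌋) -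
      #{i ∈ Finset.Ico ⌊n * s⌋ n | Int.fract (scaledArcHeight n s i) = 0} := by
    exact_mod_cast ncard_approx_upperArc hn hs₀ hs₁
  have hexc : (#{i ∈ Finset.Ico ⌊n * s⌋ n | Int.fract (scaledArcHeight n s i) = 0} : ℝ) ≤
      #(circleLatticePoints n) + 1 := by
    exact_mod_cast card_filter_fract_scaledArcHeight_le hn hs₀
  have h₁ := Int.floor_le ((n : ℝ) * √(1 - s ^ 2))
  have h₂ := Int.lt_floor_add_one ((n : ℝ) * √(1 - s ^ 2))
  have h₃ := Int.floor_le ((n : ℝ) * s)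
  have h₄ := Int.lt_floor_add_one ((n : ℝ) * s)
  rw [abs_le, hcount]
  constructor <;> nlinarith [Nat.cast_nonneg (α := ℝ)
    #{i ∈ Finset.Ico ⌊n * s⌋ n | Int.fract (scaledArcHeight n s i) = 0}]

lemma tendsto_ncard_approx_upperArc_div {s : ℝ} (hs₀ : 0 ≤ s) (hs₁ : s < 1) :
    Tendsto (fun n : ℕ => ((approx n (upperArc s)).ncard : ℝ) / n) atTop
      (𝓝 (√(1 - s ^ 2) + 1 - s)) := by
  have herr : Tendsto (fun n : ℕ => ((#(circleLatticePoints n) : ℝ) + 2) / n) atTop (𝓝 0) := by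
    simpa [add_div] using
      tendsto_card_circleLatticePoints_div.add (tendsto_const_div_atTop_nhds_zero_nat 2)
  rw [← tendsto_sub_nhds_zero_iff]
  refine squeeze_zero_norm' ?_ herr
  filter_upwards [eventually_gt_atTop 0] with n hn
  have hn' : (0 : ℝ) < n := Nat.cast_pos.2 hn
  have : ((approx n (upperArc s)).ncard : ℝ) / n - (√(1 - s ^ 2) + 1 - s) =
      (((approx n (upperArc s)).ncard : ℝ) - n * (√(1 - s ^ 2) + 1 - s)) / n := by
    field_simp
  rw [Real.norm_eq_abs, this, abs_div, Nat.abs_cast]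
  gcongr
  exact abs_ncard_approx_upperArc_sub_le hn hs₀ hs₁

lemma arc_zero_pi_div_three : arc 0 (π / 3) = upperArc (1 / 2) := by
  have hpi : π / 3 = arccos (1 / 2) := by
    rw [← cos_pi_div_three, arccos_cos (by positivity) (by linarith [pi_pos])]
  ext ⟨x, y⟩
  rw [mem_upperArc_iff (by norm_num)]
  constructor
  · rintro ⟨t, ht₀, ht, h⟩
    obtain ⟨rfl, rfl⟩ := Prod.mk.inj h
    have ht' : t ≤ π := by linarith [pi_pos]
    refine ⟨?_, ?_, sin_eq_sqrt_one_sub_cos_sq ht₀.le ht'⟩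
    · rw [← cos_pi_div_three]
      exact cos_lt_cos_of_nonneg_of_le_pi ht₀.le (by linarith [pi_pos]) ht
    · rw [← cos_zero]
      exact cos_lt_cos_of_nonneg_of_le_pi le_rfl ht' ht₀
  · rintro ⟨hx, hx₁, hy⟩
    refine ⟨arccos x, arccos_pos.2 hx₁, hpi ▸ arccos_lt_arccos (by norm_num) hx hx₁.le, ?_⟩
    rw [cos_arccos (by linarith) hx₁.le, sin_arccos, ← hy]

lemma ncard_approx_unitCircle (n : ℕ) :
    (approx n unitCircle).ncard = 4 * (approx n (upperArc 0)).ncard := by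
  have hsymm : (fun p : ℝ × ℝ => (-p.1, p.2)) ⁻¹' unitCircle = unitCircle := by
    ext; simp [unitCircle]
  have hupper : (fun p : ℝ × ℝ => (-p.1, p.2)) ⁻¹' (unitCircle ∩ {p | 0 < p.2}) =
      unitCircle ∩ {p | 0 < p.2} := by
    ext; simp [unitCircle]
  have hswap : unitCircle ∩ {p | 0 < p.1} = Prod.swap ⁻¹' (unitCircle ∩ {p | 0 < p.2}) := by
    ext; simp [unitCircle, add_comm]
  have hquarter : unitCircle ∩ {p | 0 < p.2} ∩ {p | 0 < p.1} = upperArc 0 := by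
    rw [upperArc, Set.inter_assoc]
    rfl
  rw [Set.ncard_def, encard_approx_eq_two_mul n hsymm, hswap, encard_approx_preimage_swap,
    encard_approx_eq_two_mul n hupper, hquarter, ← mul_assoc, ENat.toNat_mul, Set.ncard_def]
  rfl

theorem limit_prop_one_three :
    Filter.Tendsto
      (fun n : ℕ => ((approx n (arc 0 (Real.pi / 3))).ncard : ℝ) / ((approx n unitCircle).ncard : ℝ))
      Filter.atTop (nhds ((1 + Real.sqrt 3) / 16)) := by
  have harc := tendsto_ncard_approx_upperArc_div (s := 1 / 2) (by norm_num) (by norm_num)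
  have hcircle := (tendsto_ncard_approx_upperArc_div (s := 0) le_rfl one_pos).const_mul 4
  have hlim : (√(1 - (1 / 2 : ℝ) ^ 2) + 1 - 1 / 2) / (4 * (√(1 - 0 ^ 2) + 1 - 0)) =
      (1 + √3) / 16 := by
    rw [show (1 : ℝ) - (1 / 2) ^ 2 = 3 / 2 ^ 2 by norm_num, Real.sqrt_div' _ (by norm_num),
      Real.sqrt_sq (by norm_num)]
    norm_num
    ring
  rw [← arc_zero_pi_div_three] at harc
  rw [← hlim]
  refine (harc.div hcircle (by positivity)).congr' ?_
  filter_upwards [eventually_gt_atTop 0] with n hn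
  rw [Pi.div_apply, ncard_approx_unitCircle, Nat.cast_mul, Nat.cast_ofNat, mul_div_assoc',
    div_div_div_cancel_right₀ (Nat.cast_pos.2 hn).ne']
end

section
/- Let k ≥ 1 be an integer, γ = π/(6k), f₁(t) = sin t − cos t, f₂(t) = −sin t − cos t, f₃(t) = −sin t + cos t, and define S₁(k) = ∑_{i=1}^{k} (f₁(iγ) − f₁((i−1)γ)) · [ (f₂(6kγ) − f₂((4k+i)γ)) + (f₃((8k+i−1)γ) − f₃(6kγ)) ]. Then there is an absolute constant K such that for every k ≥ 1, | S₁(k) − (39 − 12√3 + π(√3 − 1))/12 | ≤ K/k. -/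
/-!
Using `6kγ = π`, the `i`-th summand of `S₁(k)` is `(F i - F (i-1)) (2 + F (2k-i) + F (2k+i-1))`
with `F n = f₁(nγ)`. Since `f₁ a f₁ b = cos (a - b) - sin (a + b)`, it is a constant plus
differences `cos z - cos (z + γ)` and `sin z - sin (z + γ)` whose base points `z` advance by `2γ`
with `i`; multiplied by `2 cos (γ/2)` these become telescoping differences (`s1Primitive`). This
gives the closed form
`S₁(k) = L - (2 + √3)/4 · tan (γ/2) + k ((√3 + 1)/2 (cos γ - 1) + (√3 - 1)/2 (sin γ - γ))`,
where `L` is the claimed limit, and both error terms are `O(γ) = O(1/k)` because `kγ = π/6`.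
-/

open Real

/-- `f₁(t) = sin t − cos t`. -/
noncomputable def f1 (t : ℝ) : ℝ := Real.sin t - Real.cos t

/-- `f₂(t) = −sin t − cos t`. -/
noncomputable def f2 (t : ℝ) : ℝ := -Real.sin t - Real.cos t

/-- `f₃(t) = −sin t + cos t`. -/
noncomputable def f3 (t : ℝ) : ℝ := -Real.sin t + Real.cos t

/-- The angle `γ = π/(6k)`. -/
noncomputable def gam (k : ℕ) : ℝ := Real.pi / (6 * k)

/-- The sum `S₁(k)`. -/
noncomputable def S1 (k : ℕ) : ℝ :=
  ∑ i ∈ Finset.Icc 1 k,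
    (f1 ((i : ℝ) * gam k) - f1 (((i : ℝ) - 1) * gam k)) *
      ((f2 ((6 * (k : ℝ)) * gam k) - f2 ((4 * (k : ℝ) + (i : ℝ)) * gam k)) +
       (f3 ((8 * (k : ℝ) + (i : ℝ) - 1) * gam k) - f3 ((6 * (k : ℝ)) * gam k)))

open Finset

lemma f2_pi_sub (t : ℝ) : f2 (π - t) = -f1 t := by
  simp only [f1, f2, sin_pi_sub, cos_pi_sub]; ring

lemma f3_pi_add (t : ℝ) : f3 (π + t) = f1 t := by
  simp only [f1, f3, add_comm π, sin_add_pi, cos_add_pi]; ring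

lemma f2_pi : f2 π = 1 := by simp [f2]

lemma f3_pi : f3 π = -1 := by simp [f3]

lemma f1_mul_f1 (a b : ℝ) : f1 a * f1 b = cos (a - b) - sin (a + b) := by
  simp only [f1, cos_sub, sin_add]; ring

lemma two_mul_cos_mul_cos_sub_cos (a b : ℝ) :
    2 * cos b * (cos (a - b) - cos (a + b)) = cos (a - 2 * b) - cos (a + 2 * b) := by
  simp only [cos_sub, cos_add, cos_two_mul, sin_two_mul]; ring

lemma two_mul_cos_mul_sin_sub_sin (a b : ℝ) :
    2 * cos b * (sin (a - b) - sin (a + b)) = sin (a - 2 * b) - sin (a + 2 * b) := by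
  simp only [sin_sub, sin_add, cos_two_mul, sin_two_mul]; ring

lemma sum_Icc_sub_pred (G : ℝ → ℝ) (n : ℕ) :
    ∑ i ∈ Icc 1 n, (G i - G (i - 1)) = G n - G 0 := by
  induction n with
  | zero => simp
  | succ n ih =>
    rw [sum_Icc_succ_top (by omega), ih]; push_cast; rw [add_sub_cancel_right]; ring

noncomputable def s1Primitive (k h x : ℝ) : ℝ :=
  2 * cos (h / 2) * (2 * f1 (x * h)
      + x * (sin ((2 * k - 1) * h) - sin (2 * k * h) + cos ((2 * k - 1) * h) - cos (2 * k * h)))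
    + cos ((2 * k - 2 * x - 1 / 2) * h) - sin ((2 * k + 2 * x - 1 / 2) * h)

lemma s1Primitive_sub_pred (k h x : ℝ) :
    s1Primitive k h x - s1Primitive k h (x - 1) = 2 * cos (h / 2) *
      ((f1 (x * h) - f1 ((x - 1) * h)) * (2 + f1 ((2 * k - x) * h) + f1 ((2 * k + x - 1) * h))) := by
  have hA : f1 ((2 * k - x) * h) * f1 (x * h) = cos ((2 * k - 2 * x) * h) - sin (2 * k * h) := by
    rw [f1_mul_f1]; ring_nf
  have hB : f1 ((2 * k - x) * h) * f1 ((x - 1) * h)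
      = cos ((2 * k - 2 * x + 1) * h) - sin ((2 * k - 1) * h) := by
    rw [f1_mul_f1]; ring_nf
  have hC : f1 ((2 * k + x - 1) * h) * f1 (x * h)
      = cos ((2 * k - 1) * h) - sin ((2 * k + 2 * (x - 1)) * h + h) := by
    rw [f1_mul_f1]; ring_nf
  have hD : f1 ((2 * k + x - 1) * h) * f1 ((x - 1) * h)
      = cos (2 * k * h) - sin ((2 * k + 2 * (x - 1)) * h) := by
    rw [f1_mul_f1]; ring_nf
  have hcos : 2 * cos (h / 2) * (cos ((2 * k - 2 * x) * h) - cos ((2 * k - 2 * x + 1) * h))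
      = cos ((2 * k - 2 * x - 1 / 2) * h) - cos ((2 * k - 2 * (x - 1) - 1 / 2) * h) := by
    convert two_mul_cos_mul_cos_sub_cos ((2 * k - 2 * x + 1 / 2) * h) (h / 2) using 4 <;> ring
  have hsin : 2 * cos (h / 2) * (sin ((2 * k + 2 * (x - 1)) * h) - sin ((2 * k + 2 * (x - 1)) * h + h))
      = sin ((2 * k + 2 * (x - 1) - 1 / 2) * h) - sin ((2 * k + 2 * x - 1 / 2) * h) := by
    convert two_mul_cos_mul_sin_sub_sin ((2 * k + 2 * x - 3 / 2) * h) (h / 2) using 4 <;> ring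
  unfold s1Primitive
  linear_combination -(2 * cos (h / 2)) * (hA - hB + hC - hD) - hcos - hsin

lemma S1_eq_sum (k : ℕ) :
    S1 k = ∑ i ∈ Icc 1 k, (f1 (i * gam k) - f1 ((i - 1) * gam k)) *
      (2 + f1 ((2 * k - i) * gam k) + f1 ((2 * k + i - 1) * gam k)) := by
  refine sum_congr rfl fun i hi => ?_
  have hk : (k : ℝ) ≠ 0 := Nat.cast_ne_zero.mpr (by grind)
  have hπ : 6 * (k : ℝ) * gam k = π := by rw [gam]; field_simp
  rw [hπ, show (4 * (k : ℝ) + i) * gam k = π - (2 * k - i) * gam k by rw [← hπ]; ring,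
    show (8 * (k : ℝ) + i - 1) * gam k = π + (2 * k + i - 1) * gam k by rw [← hπ]; ring,
    f2_pi_sub, f3_pi_add, f2_pi, f3_pi]
  ring

lemma natCast_mul_gam {k : ℕ} (hk : k ≠ 0) : k * gam k = π / 6 := by
  rw [gam]; field_simp

lemma gam_pos {k : ℕ} (hk : k ≠ 0) : 0 < gam k := by
  rw [gam]; positivity

lemma gam_le_pi_div_six {k : ℕ} (hk : k ≠ 0) : gam k ≤ π / 6 := by
  rw [gam, div_le_div_iff_of_pos_left pi_pos (by positivity) (by norm_num)]
  have : (1 : ℝ) ≤ k := by exact_mod_cast Nat.one_le_iff_ne_zero.mpr hk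
  linarith

lemma S1_eq_sub_tan_add {k : ℕ} (hk : k ≠ 0) :
    S1 k = (39 - 12 * √3 + π * (√3 - 1)) / 12 - (2 + √3) / 4 * tan (gam k / 2)
      + k * ((√3 + 1) / 2 * (cos (gam k) - 1) + (√3 - 1) / 2 * (sin (gam k) - gam k)) := by
  set h := gam k
  have hkh : (k : ℝ) * h = π / 6 := natCast_mul_gam hk
  have hcos : 0 < cos (h / 2) := by
    have := gam_le_pi_div_six hk
    exact cos_pos_of_mem_Ioo ⟨by linarith [pi_pos, gam_pos hk], by linarith [pi_pos]⟩
  have htele : 2 * cos (h / 2) * S1 k = s1Primitive k h k - s1Primitive k h 0 := by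
    rw [S1_eq_sum, mul_sum, ← sum_Icc_sub_pred (s1Primitive k h)]
    exact sum_congr rfl fun i _ => (s1Primitive_sub_pred _ _ _).symm
  have harg₁ : (2 * k - 2 * k - 1 / 2) * h = -(h / 2) := by ring
  have harg₂ : (2 * k + 2 * k - 1 / 2) * h = π - (π / 3 + h / 2) := by linear_combination 4 * hkh
  have harg₃ : (2 * k - 1) * h = π / 3 - h := by linear_combination 2 * hkh
  have harg₄ : 2 * k * h = π / 3 := by linear_combination 2 * hkh
  have harg₅ : (2 * k - 2 * 0 - 1 / 2) * h = π / 3 - h / 2 := by linear_combination 2 * hkh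
  have harg₆ : (2 * k + 2 * 0 - 1 / 2) * h = π / 3 - h / 2 := by linear_combination 2 * hkh
  simp only [s1Primitive] at htele
  rw [harg₁, harg₂, harg₃, harg₄, harg₅, harg₆, hkh, sin_pi_sub, zero_mul] at htele
  simp only [f1, cos_neg, sin_sub, cos_sub, sin_add, zero_mul, add_zero,
    sin_pi_div_three, cos_pi_div_three, sin_pi_div_six, cos_pi_div_six, sin_zero, cos_zero] at htele
  rw [tan_eq_sin_div_cos]
  apply mul_left_cancel₀ (show 2 * cos (h / 2) ≠ 0 by positivity)
  rw [htele]
  field_simp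
  linear_combination 96 * cos (h / 2) * (√3 - 1) * hkh

lemma tan_le_two_mul {x : ℝ} (hx₀ : 0 ≤ x) (hx₁ : x ≤ 1) : tan x ≤ 2 * x := by
  have hcos : 1 / 2 ≤ cos x := by nlinarith [one_sub_sq_div_two_le_cos (x := x)]
  rw [tan_eq_sin_div_cos, div_le_iff₀ (by linarith)]
  nlinarith [sin_le hx₀]

lemma abs_S1_sub_le {k : ℕ} (hk : k ≠ 0) :
    |S1 k - (39 - 12 * √3 + π * (√3 - 1)) / 12| ≤ 2 * gam k := by
  rw [S1_eq_sub_tan_add hk, add_sub_right_comm, sub_sub_cancel_left, neg_add_eq_sub]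
  set h := gam k
  have hkh : (k : ℝ) * h = π / 6 := natCast_mul_gam hk
  have hh₀ : 0 < h := gam_pos hk
  have hh₁ : h ≤ 1 := (gam_le_pi_div_six hk).trans (by linarith [pi_lt_d2])
  have hsqrt₀ : 1 < √3 := by rw [lt_sqrt zero_le_one]; norm_num
  have hsqrt₁ : √3 < 2 := by rw [sqrt_lt' two_pos]; norm_num
  have htan : |(2 + √3) / 4 * tan (h / 2)| ≤ h := by
    have htan₀ : 0 ≤ tan (h / 2) :=
      (le_tan (x := h / 2) (by linarith) (by linarith [pi_gt_three])).trans' (by linarith)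
    have htan₁ := tan_le_two_mul (x := h / 2) (by linarith) (by linarith)
    rw [abs_of_nonneg (by positivity)]
    nlinarith
  have hcos : |cos h - 1| ≤ h ^ 2 / 2 := by
    rw [abs_sub_comm, abs_of_nonneg (by linarith [cos_le_one h])]
    linarith [one_sub_sq_div_two_le_cos (x := h)]
  have hsin : |sin h - h| ≤ h ^ 2 / 6 := by
    rw [abs_sub_comm]
    refine (abs_sub_sin_le h).trans ?_
    rw [abs_of_pos hh₀]
    have : h ^ 3 ≤ h ^ 2 := pow_le_pow_of_le_one hh₀.le hh₁ (by norm_num)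
    linarith
  have hsecond : |(√3 + 1) / 2 * (cos h - 1) + (√3 - 1) / 2 * (sin h - h)| ≤ h ^ 2 := by
    refine (abs_add_le _ _).trans ?_
    rw [abs_mul, abs_mul, abs_of_pos (a := (√3 + 1) / 2) (by positivity),
      abs_of_pos (a := (√3 - 1) / 2) (by linarith)]
    nlinarith
  calc _ ≤ |(k : ℝ) * ((√3 + 1) / 2 * (cos h - 1) + (√3 - 1) / 2 * (sin h - h))|
        + |(2 + √3) / 4 * tan (h / 2)| := abs_sub _ _
    _ ≤ k * h ^ 2 + h := by
        rw [abs_mul, Nat.abs_cast]; gcongr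
    _ ≤ 2 * h := by nlinarith [pi_lt_d2]

theorem S1_asymptotics :
    ∃ K : ℝ, ∀ k : ℕ, 1 ≤ k →
      |S1 k - (39 - 12 * Real.sqrt 3 + Real.pi * (Real.sqrt 3 - 1)) / 12| ≤ K / k := by
  refine ⟨π / 3, fun k hk => (abs_S1_sub_le (by omega)).trans_eq ?_⟩
  rw [gam]; ring
end

section
/- Let c ∈ ℝ², r > 0, and t₀ ≤ t₁ with t₁ − t₀ ≤ 2π. If the circular arc {c + r(cos t, sin t) : t₀ ≤ t ≤ t₁} is contained in a closed axis-parallel square of side length 1, then its arc length r(t₁ − t₀) is at most π. -/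
set_option maxHeartbeats 1000000

open Real Set

theorem arc_in_unit_square_length_le_pi (c : ℝ × ℝ) (r : ℝ) (hr : 0 < r) (t₀ t₁ : ℝ)
    (h01 : t₀ ≤ t₁) (h2π : t₁ - t₀ ≤ 2 * Real.pi) (x y : ℝ)
    (hsub : {p : ℝ × ℝ | ∃ t : ℝ, t₀ ≤ t ∧ t ≤ t₁ ∧
        p = (c.1 + r * Real.cos t, c.2 + r * Real.sin t)} ⊆
      Set.Icc x (x + 1) ×ˢ Set.Icc y (y + 1)) :
    r * (t₁ - t₀) ≤ Real.pi := by
  have hπ := Real.pi_pos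
  have hΔ0 : 0 ≤ t₁ - t₀ := by linarith
  have hmem : ∀ t : ℝ, t₀ ≤ t → t ≤ t₁ →
      c.1 + r * Real.cos t ∈ Icc x (x + 1) ∧ c.2 + r * Real.sin t ∈ Icc y (y + 1) := by
    intro t ht0 ht1
    exact hsub (show ((c.1 + r * Real.cos t, c.2 + r * Real.sin t) : ℝ × ℝ) ∈ _ from
      ⟨t, ht0, ht1, rfl⟩)
  have key : ∀ s t : ℝ, t₀ ≤ s → s ≤ t₁ → t₀ ≤ t → t ≤ t₁ →
      r * (Real.cos s - Real.cos t) ≤ 1 ∧ r * (Real.sin s - Real.sin t) ≤ 1 := by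
    intro s t hs0 hs1 ht0 ht1
    obtain ⟨⟨hxs1, hxs2⟩, hys1, hys2⟩ := hmem s hs0 hs1
    obtain ⟨⟨hxt1, hxt2⟩, hyt1, hyt2⟩ := hmem t ht0 ht1
    constructor <;> nlinarith
  clear hsub hmem
  rcases le_or_gt (t₁ - t₀) Real.pi with hcase | hcase
  · -- short arc: chord argument
    obtain ⟨hc1, hs1⟩ := key t₁ t₀ h01 le_rfl le_rfl h01
    obtain ⟨hc2, hs2⟩ := key t₀ t₁ le_rfl h01 h01 le_rfl
    set S := Real.sin ((t₁ - t₀) / 2) with hS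
    have hS0 : 0 ≤ S := Real.sin_nonneg_of_nonneg_of_le_pi (by linarith) (by linarith)
    have hid : (Real.cos t₁ - Real.cos t₀) ^ 2 + (Real.sin t₁ - Real.sin t₀) ^ 2
        = 2 - 2 * Real.cos (t₁ - t₀) := by
      rw [Real.cos_sub]
      linear_combination Real.sin_sq_add_cos_sq t₁ + Real.sin_sq_add_cos_sq t₀
    have hhalf : Real.cos (t₁ - t₀) = 1 - 2 * S ^ 2 := by
      have h := Real.sin_sq_eq_half_sub ((t₁ - t₀) / 2)
      rw [show 2 * ((t₁ - t₀) / 2) = t₁ - t₀ by ring] at h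
      rw [hS]
      linarith
    have hA : r ^ 2 * (4 * S ^ 2) ≤ 2 := by nlinarith [hc1, hc2, hs1, hs2, hid, hhalf]
    have hJ : 2 / Real.pi * ((t₁ - t₀) / 2) ≤ S :=
      Real.mul_le_sin (by linarith) (by linarith)
    have hJ' : t₁ - t₀ ≤ Real.pi * S := by
      rw [div_mul_eq_mul_div, div_le_iff₀ hπ] at hJ
      linarith
    have hsq : (t₁ - t₀) ^ 2 ≤ Real.pi ^ 2 * S ^ 2 := by nlinarith [hJ', hΔ0, hS0]
    have h2 : (r * (t₁ - t₀)) ^ 2 ≤ Real.pi ^ 2 / 2 := by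
      nlinarith [mul_le_mul_of_nonneg_left hsq (sq_nonneg r), hA, sq_nonneg Real.pi, hπ]
    nlinarith [h2, hπ, mul_nonneg hr.le hΔ0]
  · -- long arc
    have hant : ∀ t : ℝ, t₀ ≤ t → t ≤ t₁ - Real.pi →
        (2 * r * Real.cos t) ^ 2 ≤ 1 ∧ (2 * r * Real.sin t) ^ 2 ≤ 1 := by
      intro t h0 h1'
      have hp : t + Real.pi ≤ t₁ := by linarith
      have ht1 : t ≤ t₁ := by linarith
      obtain ⟨hcA, hsA⟩ := key t (t + Real.pi) h0 ht1 (by linarith) hp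
      obtain ⟨hcB, hsB⟩ := key (t + Real.pi) t (by linarith) hp h0 ht1
      simp only [Real.cos_add_pi, Real.sin_add_pi] at hcA hsA hcB hsB
      constructor <;> nlinarith
    clear key
    have hr2 : 4 * r ^ 2 ≤ 2 := by
      obtain ⟨hc, hs⟩ := hant t₀ le_rfl (by linarith)
      nlinarith [Real.sin_sq_add_cos_sq t₀, sq_nonneg r]
    rcases le_or_gt r (1 / 2) with hr12 | hr12
    · have h' : r * (t₁ - t₀) ≤ 1 / 2 * (t₁ - t₀) := mul_le_mul_of_nonneg_right hr12 hΔ0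
      linarith
    · have hcos2 : ∀ t : ℝ, t₀ ≤ t → t ≤ t₁ - Real.pi →
          2 * r ^ 2 * Real.cos (2 * t) ≤ 1 - 2 * r ^ 2 ∧
          2 * r ^ 2 - 1 ≤ 2 * r ^ 2 * Real.cos (2 * t) := by
        intro t h0 h1'
        obtain ⟨hc, hs⟩ := hant t h0 h1'
        have e1 := Real.cos_two_mul t
        have e2 := Real.sin_sq_add_cos_sq t
        constructor <;> nlinarith
      clear hant
      rcases le_or_gt (3 * Real.pi / 2) (t₁ - t₀) with h32 | h32
      · -- interval [2t₀, 2t₁-2π] has length ≥ π : contains kπ, contradiction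
        exfalso
        set k : ℤ := ⌈2 * t₀ / Real.pi⌉ with hk
        have hk1 : 2 * t₀ ≤ (k : ℝ) * Real.pi := by
          have := Int.le_ceil (2 * t₀ / Real.pi)
          rw [div_le_iff₀ hπ] at this
          linarith
        have hk2 : (k : ℝ) * Real.pi ≤ 2 * t₀ + Real.pi := by
          have := Int.ceil_lt_add_one (2 * t₀ / Real.pi)
          have h' : (k : ℝ) * Real.pi < (2 * t₀ / Real.pi + 1) * Real.pi := by
            apply mul_lt_mul_of_pos_right this hπ
          rw [add_mul, div_mul_cancel₀ _ hπ.ne'] at h'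
          linarith [one_mul Real.pi]
        obtain ⟨hA, hB⟩ := hcos2 ((k : ℝ) * Real.pi / 2) (by linarith) (by linarith)
        rw [show 2 * ((k : ℝ) * Real.pi / 2) = (k : ℝ) * Real.pi by ring] at hA hB
        have hpyth := Real.sin_sq_add_cos_sq ((k : ℝ) * Real.pi)
        rw [Real.sin_int_mul_pi] at hpyth
        have hcsq : Real.cos ((k : ℝ) * Real.pi) ^ 2 = 1 := by nlinarith [hpyth]
        have h1 : (2 * r ^ 2 * Real.cos ((k : ℝ) * Real.pi)) ^ 2 ≤ (1 - 2 * r ^ 2) ^ 2 := by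
          nlinarith [hA, hB]
        nlinarith [h1, hcsq, hr12, hr]
      · -- π < Δ < 3π/2 : midpoint argument
        set L : ℝ := t₁ - t₀ - Real.pi with hL
        have hL0 : 0 < L := by rw [hL]; linarith
        have hL2 : L < Real.pi / 2 := by rw [hL]; linarith
        set M : ℝ := t₀ + t₁ - Real.pi with hM
        obtain ⟨ha1, ha2⟩ := hcos2 t₀ le_rfl (by linarith)
        obtain ⟨hb1, hb2⟩ := hcos2 (t₁ - Real.pi) (by linarith) le_rfl
        obtain ⟨hm1, hm2⟩ := hcos2 ((t₀ + t₁ - Real.pi) / 2) (by linarith) (by linarith)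
        rw [show 2 * ((t₀ + t₁ - Real.pi) / 2) = M by rw [hM]; ring] at hm1 hm2
        have hid := Real.cos_sub_cos (2 * t₀) (2 * (t₁ - Real.pi))
        rw [show (2 * t₀ + 2 * (t₁ - Real.pi)) / 2 = M by rw [hM]; ring,
            show (2 * t₀ - 2 * (t₁ - Real.pi)) / 2 = -L by rw [hL]; ring,
            Real.sin_neg] at hid
        set s : ℝ := Real.sin L with hs
        have hs0 : 0 ≤ s := Real.sin_nonneg_of_nonneg_of_le_pi hL0.le (by linarith)
        have hs1 : s ≤ 1 := Real.sin_le_one L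
        have hJ : 2 / Real.pi * L ≤ s := Real.mul_le_sin hL0.le (by linarith)
        have hJ' : 2 * L ≤ Real.pi * s := by
          rw [div_mul_eq_mul_div, div_le_iff₀ hπ] at hJ
          linarith
        set D : ℝ := Real.sin M with hD
        have hpythM : D ^ 2 + Real.cos M ^ 2 = 1 := by
          rw [hD]; exact Real.sin_sq_add_cos_sq M
        set A : ℝ := r ^ 2 with hA
        have hA14 : 1 / 4 < A := by rw [hA]; nlinarith
        have hA12 : A ≤ 1 / 2 := by rw [hA]; nlinarith [hr2]
        have hdiff1 : 2 * A * (2 * D * s) ≤ 2 * (1 - 2 * A) := by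
          nlinarith [ha1, ha2, hb1, hb2, hid]
        have hdiff2 : -(2 * (1 - 2 * A)) ≤ 2 * A * (2 * D * s) := by
          nlinarith [ha1, ha2, hb1, hb2, hid]
        have hcM : (2 * A * Real.cos M) ^ 2 ≤ (1 - 2 * A) ^ 2 := by nlinarith [hm1, hm2]
        have hDsq : 4 * A ^ 2 - (1 - 2 * A) ^ 2 ≤ 4 * A ^ 2 * D ^ 2 := by
          have h4 : 4 * A ^ 2 * D ^ 2 = 4 * A ^ 2 - (2 * A * Real.cos M) ^ 2 := by
            linear_combination (4 * A ^ 2) * hpythM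
          linarith [hcM, h4.ge, h4.le]
        -- from here on: pure polynomial arithmetic; drop definitional bodies
        clear_value L M s D A
        clear hid ha1 ha2 hb1 hb2 hm1 hm2 hpythM hcM hJ hcos2 hM hs hD h2π hcase h32 h01 hΔ0
        have hs2le : s ^ 2 ≤ 1 := by nlinarith [hs0, hs1]
        have hp1 : 16 * A ^ 2 * D ^ 2 * s ^ 2 ≤ 4 * (1 - 2 * A) ^ 2 := by
          nlinarith [hdiff1, hdiff2]
        have hp2 : (4 * A ^ 2 - (1 - 2 * A) ^ 2) * s ^ 2 ≤ 4 * A ^ 2 * D ^ 2 * s ^ 2 :=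
          mul_le_mul_of_nonneg_right hDsq (sq_nonneg s)
        have hkey : 4 * A ^ 2 * s ^ 2 ≤ 2 * (1 - 2 * A) ^ 2 := by
          nlinarith [hp1, hp2, mul_le_mul_of_nonneg_left hs2le (sq_nonneg (1 - 2 * A))]
        clear hp1 hp2 hdiff1 hdiff2 hDsq
        have hB0 : 0 ≤ 1 - 2 * A := by linarith
        have hA0 : (0:ℝ) ≤ A := by nlinarith [hA14]
        have hsqrt2 : Real.sqrt 2 ^ 2 = 2 := Real.sq_sqrt (by norm_num)
        have hX0 : 0 ≤ Real.sqrt 2 * (A * s) :=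
          mul_nonneg (Real.sqrt_nonneg 2) (mul_nonneg hA0 hs0)
        have hXsq : (Real.sqrt 2 * (A * s)) ^ 2 = 2 * A ^ 2 * s ^ 2 := by
          rw [mul_pow, hsqrt2]; ring
        have hBs : Real.sqrt 2 * (A * s) ≤ 1 - 2 * A := by
          nlinarith [hkey, hB0, hX0, hXsq]
        have h14 : (1.4 : ℝ) ≤ Real.sqrt 2 := by
          nlinarith [hsqrt2, Real.sqrt_nonneg 2]
        have hBge : 1.4 * (A * s) ≤ 1 - 2 * A := by
          have h' : 1.4 * (A * s) ≤ Real.sqrt 2 * (A * s) :=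
            mul_le_mul_of_nonneg_right h14 (mul_nonneg hA0 hs0)
          linarith
        clear hkey hBs hXsq hX0 hsqrt2 h14 hs2le
        have hAs : A * (2 * L) ≤ A * (Real.pi * s) := mul_le_mul_of_nonneg_left hJ' hA0
        have hπB : 2.8 * (A * L) ≤ Real.pi * (1 - 2 * A) := by
          have c1 : Real.pi * (1.4 * (A * s)) ≤ Real.pi * (1 - 2 * A) :=
            mul_le_mul_of_nonneg_left hBge hπ.le
          nlinarith [c1, hAs, hπ]
        have hfin : A * (Real.pi + L) ^ 2 ≤ Real.pi ^ 2 := by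
          nlinarith [mul_le_mul_of_nonneg_left hπB hπ.le,
            mul_nonneg (by linarith : (0:ℝ) ≤ 1 / 2 - A) (mul_pos hπ hL0).le,
            mul_nonneg (by linarith : (0:ℝ) ≤ 1 / 2 - A) (sq_nonneg L),
            mul_nonneg (by linarith : (0:ℝ) ≤ Real.pi / 2 - L) hL0.le,
            mul_nonneg (by linarith : (0:ℝ) ≤ Real.pi / 2 - L) hπ.le,
            hA12, hL0.le, hL2, hπ]
        have hΔL : t₁ - t₀ = Real.pi + L := by rw [hL]; ring
        rw [hΔL]
        nlinarith [hfin, hπ, hL0, mul_nonneg hr.le (by linarith : (0:ℝ) ≤ Real.pi + L),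
          sq_nonneg (r * (Real.pi + L) - Real.pi), hA]
end
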